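/- For any communicating class C, the lift Δ̄_C is isolated for the shift flow with isolation constant 1/4: if g ∈ Δ̄ satisfies ψ(t,g) stays within distance 1/4 of Δ̄_C for all t ∈ ℝ, then g ∈ Δ̄_C. More precisely, if g ∉ Δ̄_C, then there exists t_0 ∈ ℝ such that d(ψ(t_0,g), f) > 1/4 for every f ∈ Δ̄_C. -/

import Mathlib

open MeasureTheory

def PC (S : Type*) (h : ℝ) : Set (ℝ → S) :=
  {x | ∀ n : ℤ, ∀ t ∈ Set.Ico ((n : ℝ) * h) (((n : ℝ) + 1) * h), x t = x ((n : ℝ) * h)}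

/-- Aligned admissible functions (`Δ̄`). -/
def Adm {S : Type*} (E : S → S → Prop) (h : ℝ) : Set (ℝ → S) :=
  {x | x ∈ PC S h ∧ ∀ n : ℤ, E (x ((n : ℝ) * h)) (x (((n : ℝ) + 1) * h))}

noncomputable def dd {S : Type*} [DecidableEq S] (h : ℝ) (x y : ℝ → S) : ℝ :=
  ∑' i : ℤ,
    ((1 / h) * ∫ t in (i : ℝ) * h..((i : ℝ) + 1) * h, (if x t = y t then (0 : ℝ) else 1)) /
      4 ^ i.natAbs

def IsCommClass {V : Type*} (E : V → V → Prop) (C : Set V) : Prop :=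
  (∀ a ∈ C, ∀ b ∈ C, Relation.ReflTransGen E a b) ∧
  ∀ C' : Set V, C ⊆ C' → (∀ a ∈ C', ∀ b ∈ C', Relation.ReflTransGen E a b) → C' = C

/-! The summand `i = 0` of `dd h x y` is `1` as soon as the piecewise constant functions `x`, `y`
differ at `0`, and all summands are nonnegative, so then `dd h x y ≥ 1`. If `g` leaves `C` at
time `t`, it does so at the grid point `⌊t / h⌋ h`; shifting `g` by that amount puts a value
outside `C` at time `0`, where every `f` with values in `C` disagrees with it. -/

section Distance

variable {S : Type*} [DecidableEq S] {h : ℝ}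

noncomputable def ddTerm (h : ℝ) (x y : ℝ → S) (i : ℤ) : ℝ :=
  ((1 / h) * ∫ t in (i : ℝ) * h..((i : ℝ) + 1) * h, (if x t = y t then (0 : ℝ) else 1)) /
    4 ^ i.natAbs

theorem dd_eq_tsum_ddTerm (h : ℝ) (x y : ℝ → S) : dd h x y = ∑' i, ddTerm h x y i := rfl

theorem ddTerm_nonneg (hh : 0 < h) (x y : ℝ → S) (i : ℤ) : 0 ≤ ddTerm h x y i := by
  have hle : (i : ℝ) * h ≤ ((i : ℝ) + 1) * h := by nlinarith
  have hint : 0 ≤ ∫ t in (i : ℝ) * h..((i : ℝ) + 1) * h, (if x t = y t then (0 : ℝ) else 1) :=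
    intervalIntegral.integral_nonneg hle fun t _ => by split_ifs <;> norm_num
  unfold ddTerm
  positivity

-- No integrability is needed: a non-integrable integrand has integral `0`.
theorem ddTerm_le (hh : 0 < h) (x y : ℝ → S) (i : ℤ) :
    ddTerm h x y i ≤ (1 / 4 : ℝ) ^ i.natAbs := by
  have hint : ‖∫ t in (i : ℝ) * h..((i : ℝ) + 1) * h, (if x t = y t then (0 : ℝ) else 1)‖ ≤
      1 * |((i : ℝ) + 1) * h - (i : ℝ) * h| :=
    intervalIntegral.norm_integral_le_of_norm_le_const fun t _ => by split_ifs <;> norm_num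
  have hlen : |((i : ℝ) + 1) * h - (i : ℝ) * h| = h := by
    rw [show ((i : ℝ) + 1) * h - (i : ℝ) * h = h by ring, abs_of_pos hh]
  rw [hlen, one_mul, Real.norm_eq_abs] at hint
  unfold ddTerm
  rw [div_pow, one_pow, div_le_div_iff_of_pos_right (by positivity), one_div,
    inv_mul_le_iff₀ hh, mul_one]
  exact (le_abs_self _).trans hint

theorem summable_one_div_four_pow_natAbs : Summable fun i : ℤ => (1 / 4 : ℝ) ^ i.natAbs := by
  have hgeom := summable_geometric_of_lt_one (by norm_num : (0 : ℝ) ≤ 1 / 4) (by norm_num)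
  exact Summable.of_nat_of_neg (by simpa using hgeom) (by simpa using hgeom)

theorem ddTerm_le_dd (hh : 0 < h) (x y : ℝ → S) (i : ℤ) : ddTerm h x y i ≤ dd h x y :=
  dd_eq_tsum_ddTerm h x y ▸ (summable_one_div_four_pow_natAbs.of_nonneg_of_le (ddTerm_nonneg hh x y)
    (ddTerm_le hh x y)).le_tsum i fun j _ => ddTerm_nonneg hh x y j

theorem integral_ite_ne_eq_of_mem_PC (hh : 0 < h) {x y : ℝ → S} (hx : x ∈ PC S h)
    (hy : y ∈ PC S h) (i : ℤ) :
    ∫ t in (i : ℝ) * h..((i : ℝ) + 1) * h, (if x t = y t then (0 : ℝ) else 1) =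
      (if x ((i : ℝ) * h) = y ((i : ℝ) * h) then (0 : ℝ) else 1) * h := by
  have hle : (i : ℝ) * h ≤ ((i : ℝ) + 1) * h := by nlinarith
  have hae : ∀ᵐ t : ℝ, t ≠ ((i : ℝ) + 1) * h := by
    simp [ae_iff]
  rw [intervalIntegral.integral_congr_ae
    (g := fun _ => (if x ((i : ℝ) * h) = y ((i : ℝ) * h) then (0 : ℝ) else 1)) ?_]
  · rw [intervalIntegral.integral_const, smul_eq_mul]
    ring
  filter_upwards [hae] with t ht htmem
  rw [Set.uIoc_of_le hle] at htmem
  have htI : t ∈ Set.Ico ((i : ℝ) * h) (((i : ℝ) + 1) * h) := ⟨htmem.1.le, htmem.2.lt_of_ne ht⟩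
  rw [hx i t htI, hy i t htI]

theorem one_le_dd_of_ne (hh : 0 < h) {x y : ℝ → S} (hx : x ∈ PC S h) (hy : y ∈ PC S h)
    (hxy : x 0 ≠ y 0) : 1 ≤ dd h x y := by
  have hterm : ddTerm h x y 0 = 1 := by
    rw [ddTerm, integral_ite_ne_eq_of_mem_PC hh hx hy 0]
    simp [hxy, hh.ne']
  exact hterm ▸ ddTerm_le_dd hh x y 0

end Distance

section PiecewiseConstant

variable {S : Type*} {h : ℝ}

theorem apply_eq_apply_floor_of_mem_PC (hh : 0 < h) {x : ℝ → S} (hx : x ∈ PC S h) (t : ℝ) :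
    x t = x (⌊t / h⌋ * h) := by
  refine hx ⌊t / h⌋ t ⟨?_, ?_⟩
  · exact (le_div_iff₀ hh).mp (Int.floor_le _)
  · exact (div_lt_iff₀ hh).mp (Int.lt_floor_add_one _)

theorem comp_add_int_mul_mem_PC {x : ℝ → S} (hx : x ∈ PC S h) (n : ℤ) :
    (fun s => x (s + n * h)) ∈ PC S h := by
  intro i s hs
  have hs' : s + n * h ∈ Set.Ico (((i + n : ℤ) : ℝ) * h) ((((i + n : ℤ) : ℝ) + 1) * h) := by
    push_cast
    constructor <;> linarith [hs.1, hs.2]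
  have hgrid : (i : ℝ) * h + n * h = ((i + n : ℤ) : ℝ) * h := by push_cast; ring
  simp only [hx (i + n) _ hs', hgrid]

end PiecewiseConstant

theorem lift_isolated_general {V : Type*} [DecidableEq V] (E : V → V → Prop)
    (h : ℝ) (hh : 0 < h) (C : Set V)
    (g : ℝ → V) (hg : g ∈ Adm E h) (hgC : ¬ ∀ t : ℝ, g t ∈ C) :
    ∃ t₀ : ℝ, ∀ f : ℝ → V, f ∈ Adm E h → (∀ t : ℝ, f t ∈ C) →
      dd h (fun s => g (s + t₀)) f > 1 / 4 := by
  push Not at hgC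
  obtain ⟨t, htC⟩ := hgC
  refine ⟨⌊t / h⌋ * h, fun f hf hfC => ?_⟩
  have hne : g (0 + ⌊t / h⌋ * h) ≠ f 0 := by
    rw [zero_add, ← apply_eq_apply_floor_of_mem_PC hh hg.1]
    exact fun heq => htC (heq ▸ hfC 0)
  have := one_le_dd_of_ne hh (comp_add_int_mul_mem_PC hg.1 ⌊t / h⌋) hf.1 hne
  linarith

/-- The lift `Δ̄_C` is isolated with isolation constant `1/4`: if `g ∈ Δ̄` does not
take values only in `C`, some shift of `g` is at distance `> 1/4` from all of `Δ̄_C`. -/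
theorem lift_isolated {V : Type*} [Fintype V] [DecidableEq V] (E : V → V → Prop)
    (hout : ∀ v : V, ∃ w : V, E v w) (hin : ∀ v : V, ∃ w : V, E w v)
    (h : ℝ) (hh : 0 < h) (C : Set V) (hC : IsCommClass E C)
    (g : ℝ → V) (hg : g ∈ Adm E h) (hgC : ¬ ∀ t : ℝ, g t ∈ C) :
    ∃ t₀ : ℝ, ∀ f : ℝ → V, f ∈ Adm E h → (∀ t : ℝ, f t ∈ C) →
      dd h (fun s => g (s + t₀)) f > 1 / 4 :=
  lift_isolated_general E h hh C g hg hgC
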